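/- arXiv:1512.06441 — 3 statements merged into one kernel-verified Lean document; each statement's English description precedes it below -/
import Mathlib

section
/- Let t ≥ 0 be an integer, let H be a graph with tree-width at most t, and let λ : V(H) → ℝ satisfy |λ(v)| ≤ 1 for every vertex v. If Σ_{v ∈ V(H)} λ(v) ≥ 3t + 3, then there exists a separation (K, L) of H such that (1/3)·Σ_{v ∈ V(H)} λ(v) ≤ Σ_{v ∈ K \ L} λ(v) ≤ (2/3)·Σ_{v ∈ V(H)} λ(v) and |K ∩ L| ≤ t + 1. -/
/-!
Take a tree decomposition `(T, β)` with bags of size at most `t + 1` and put `S = ∑ λ`. For an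
edge `ab` of `T`, the piece `piece T β a b` consists of the vertices outside `β a` that occur in a
bag on the `b`-side of `ab`. The pieces at a node `a` partition `V ∖ β a` and no edge of the graph
joins two of them. Across an edge `ab` the two pieces miss only vertices of `β a`, whose weight is
at least `-(t + 1) ≥ -S/3`, so they are not both heavy (weight `> 2S/3`). Following heavy pieces,
the pieces shrink while the distance from the current node to the bags of each of their vertices
drops, so this cannot go on forever: some node `a` has no heavy piece. The pieces at `a` weigh
`S - λ(β a) ≥ S/3` in total, so a single piece or a smallest subfamily of weight at least `S/3`
weighs at most `2S/3`; its union `P` gives the separation `(P ∪ β a, V ∖ P)`.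
-/

open SimpleGraph

/-- A tree decomposition of `G`: a tree `T` with a bag `β a ⊆ V(G)` for each node `a`,
such that every vertex and every edge of `G` lies in some bag, and for each vertex `v`
the set of nodes whose bag contains `v` induces a connected subtree of `T`. -/
structure IsTreeDecomp {V α : Type} (G : SimpleGraph V) (T : SimpleGraph α)
    (β : α → Set V) : Prop where
  isTree : T.IsTree
  mem_bag : ∀ v : V, ∃ a, v ∈ β a
  edge_bag : ∀ ⦃u v : V⦄, G.Adj u v → ∃ a, u ∈ β a ∧ v ∈ β a
  bag_conn : ∀ v : V, (T.induce {a | v ∈ β a}).Connected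

/-- `G` has a tree decomposition of width at most `w` (all bags of size at most `w + 1`). -/
def HasTWDecomp {V : Type} (G : SimpleGraph V) (w : ℕ) : Prop :=
  ∃ (α : Type) (T : SimpleGraph α) (β : α → Set V),
    IsTreeDecomp G T β ∧ ∀ a, (β a).Finite ∧ (β a).ncard ≤ w + 1

/-- The tree-width of `G`, as an extended natural number. -/
noncomputable def treewidth {V : Type} (G : SimpleGraph V) : ℕ∞ :=
  ⨅ (w : ℕ) (_ : HasTWDecomp G w), (w : ℕ∞)

namespace SimpleGraph

variable {α : Type*} {T : SimpleGraph α} {a b c d e : α}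

def branch (T : SimpleGraph α) (a b : α) : Set α :=
  {d | ∃ p : T.Walk b d, s(a, b) ∉ p.edges}

lemma mem_branch_self : b ∈ T.branch a b :=
  ⟨Walk.nil, by simp⟩

lemma mem_branch_of_adj (hd : d ∈ T.branch a b) (hde : T.Adj d e) (hne : s(d, e) ≠ s(a, b)) :
    e ∈ T.branch a b := by
  obtain ⟨p, hp⟩ := hd
  refine ⟨p.concat hde, ?_⟩
  simp only [Walk.edges_concat, List.concat_eq_append, List.mem_append, List.mem_singleton]
  rintro (h | h)
  exacts [hp h, hne h.symm]

lemma IsAcyclic.mem_edges_of_walk (hT : T.IsAcyclic) (hab : T.Adj a b) (p : T.Walk a b) :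
    s(a, b) ∈ p.edges :=
  isBridge_iff_forall_walk_mem_edges.1 (isAcyclic_iff_forall_adj_isBridge.1 hT hab) p

lemma IsAcyclic.disjoint_branch (hT : T.IsAcyclic) (hab : T.Adj a b) :
    Disjoint (T.branch a b) (T.branch b a) := by
  rw [Set.disjoint_left]
  rintro d ⟨p, hp⟩ ⟨q, hq⟩
  have := hT.mem_edges_of_walk hab.symm (p.append q.reverse)
  rw [Walk.edges_append, List.mem_append, Walk.edges_reverse, List.mem_reverse] at this
  exact this.elim (fun h => hp (Sym2.eq_swap ▸ h)) hq

lemma Connected.mem_branch_or (hT : T.Connected) (a b d : α) :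
    d ∈ T.branch a b ∨ d ∈ T.branch b a := by
  have step : ∀ {a b x y : α}, x ∈ T.branch a b → T.Adj x y →
      y ∈ T.branch a b ∪ T.branch b a := by
    intro a b x y hx hxy
    by_cases hne : s(x, y) = s(a, b)
    · rcases Sym2.eq_iff.1 hne with ⟨rfl, rfl⟩ | ⟨rfl, rfl⟩
      exacts [Or.inl mem_branch_self, Or.inr mem_branch_self]
    · exact Or.inl (mem_branch_of_adj hx hxy hne)
  by_contra hd
  rw [← Set.mem_union] at hd
  obtain ⟨dt, -, hx, hy⟩ :=
    (hT b d).some.exists_boundary_dart _ (Or.inl mem_branch_self) hd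
  rcases hx with hx | hx
  · exact hy (step hx dt.adj)
  · exact hy ((step hx dt.adj).symm)

lemma IsAcyclic.branch_subset_branch (hT : T.IsAcyclic) (hab : T.Adj a b) (hbc : T.Adj b c)
    (hca : c ≠ a) : T.branch b c ⊆ T.branch a b := by
  classical
  rintro d ⟨w, hw⟩
  set p := w.bypass
  have hp : s(b, c) ∉ p.edges := fun h => hw (w.edges_bypass_subset_edges h)
  have hb : b ∉ p.support := by
    intro hb
    have := hT.mem_edges_of_walk hbc (p.takeUntil b hb).reverse
    rw [Walk.edges_reverse, List.mem_reverse] at this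
    exact hp (p.edges_takeUntil_subset_edges hb this)
  refine ⟨Walk.cons hbc p, ?_⟩
  rw [Walk.edges_cons, List.mem_cons, not_or]
  refine ⟨fun h => ?_, fun h => hb (p.snd_mem_support_of_mem_edges h)⟩
  rcases Sym2.eq_iff.1 h with ⟨h1, -⟩ | ⟨h1, -⟩
  exacts [hab.ne h1, hca h1.symm]

lemma Connected.exists_adj_mem_branch (hT : T.Connected) (hda : d ≠ a) :
    ∃ b, T.Adj a b ∧ d ∈ T.branch a b := by
  classical
  obtain ⟨p, hp⟩ := (hT a d).some.toPath
  cases p with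
  | nil => exact absurd rfl hda
  | cons h q =>
    rw [Walk.cons_isPath_iff] at hp
    exact ⟨_, h, q, fun he => hp.2 (q.fst_mem_support_of_mem_edges he)⟩

section Separation

variable {V : Type*} {G : SimpleGraph V}

def IsSeparation (G : SimpleGraph V) (K L : Set V) : Prop :=
  K ∪ L = Set.univ ∧ ∀ u ∈ K \ L, ∀ v ∈ L \ K, ¬ G.Adj u v

theorem isSeparation_union_compl {P X : Set V}
    (hP : ∀ u ∈ P, ∀ v, G.Adj u v → v ∉ X → v ∈ P) : G.IsSeparation (P ∪ X) Pᶜ := by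
  refine ⟨by rw [Set.union_right_comm, Set.union_compl_self, Set.univ_union], ?_⟩
  rintro u ⟨-, hu⟩ v ⟨hv, hvK⟩ huv
  exact hv (hP u (Set.not_notMem.1 hu) v huv fun hvX => hvK (Or.inr hvX))

end Separation

end SimpleGraph

theorem HasTWDecomp.mono {V : Type} {G : SimpleGraph V} {w w' : ℕ} (h : HasTWDecomp G w)
    (hw : w ≤ w') : HasTWDecomp G w' := by
  obtain ⟨α, T, β, hdec, hbag⟩ := h
  exact ⟨α, T, β, hdec, fun a => ⟨(hbag a).1, (hbag a).2.trans (by omega)⟩⟩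

theorem hasTWDecomp_of_treewidth_le {V : Type} {G : SimpleGraph V} {t : ℕ}
    (h : treewidth G ≤ t) : HasTWDecomp G t := by
  by_contra hG
  have ht : ((t + 1 : ℕ) : ℕ∞) ≤ treewidth G :=
    le_iInf₂ fun w hw => by exact_mod_cast not_le.1 fun hwt => hG (hw.mono hwt)
  exact absurd (ht.trans h) (by norm_cast; omega)

theorem abs_finsum_mem_le_ncard {V : Type*} {f : V → ℝ} {X : Set V} (hX : X.Finite)
    (hf : ∀ v ∈ X, |f v| ≤ 1) : |∑ᶠ v ∈ X, f v| ≤ X.ncard := by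
  rw [finsum_mem_eq_finite_toFinset_sum f hX, Set.ncard_eq_toFinset_card X hX]
  calc |∑ v ∈ hX.toFinset, f v| ≤ ∑ v ∈ hX.toFinset, |f v| := Finset.abs_sum_le_sum_abs _ _
    _ ≤ ∑ v ∈ hX.toFinset, (1 : ℝ) := Finset.sum_le_sum fun v hv => hf v (by simpa using hv)
    _ = hX.toFinset.card := by simp

theorem Finset.exists_subset_sum_mem_Icc {ι : Type*} (s : Finset ι) (f : ι → ℝ) {c : ℝ}
    (hc : 0 ≤ c) (hf : ∀ i ∈ s, f i ≤ 2 * c) (hs : c ≤ ∑ i ∈ s, f i) :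
    ∃ u ⊆ s, c ≤ ∑ i ∈ u, f i ∧ ∑ i ∈ u, f i ≤ 2 * c := by
  classical
  by_cases hbig : ∃ i ∈ s, c ≤ f i
  · obtain ⟨i, hi, hfi⟩ := hbig
    exact ⟨{i}, by simpa using hi, by simpa using hfi, by simpa using hf i hi⟩
  push Not at hbig
  -- a smallest subfamily reaching `c` overshoots by less than one of its members
  obtain ⟨u, hu, hmin⟩ := (s.powerset.filter fun u => c ≤ ∑ i ∈ u, f i).exists_min_image
    Finset.card ⟨s, by simpa using hs⟩
  rw [Finset.mem_filter, Finset.mem_powerset] at hu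
  refine ⟨u, hu.1, hu.2, ?_⟩
  rcases u.eq_empty_or_nonempty with rfl | ⟨i, hi⟩
  · simpa using hc
  have herase : ∑ j ∈ u.erase i, f j < c := by
    by_contra! h
    have := hmin (u.erase i) (by simp [h, (u.erase_subset i).trans hu.1])
    exact (Finset.card_erase_lt_of_mem hi).not_ge this
  rw [← Finset.add_sum_erase u f hi]
  linarith [hbig i (hu.1 hi)]

namespace IsTreeDecomp

open SimpleGraph

variable {V α : Type} {G : SimpleGraph V} {T : SimpleGraph α} {β : α → Set V} {a b b' c : α}
  {u v : V}

theorem mem_inter_of_mem_branch (hdec : IsTreeDecomp G T β) (hab : T.Adj a b) {x y : α}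
    (hx : x ∈ T.branch a b) (hy : y ∈ T.branch b a) (hvx : v ∈ β x) (hvy : v ∈ β y) :
    v ∈ β a ∩ β b := by
  obtain ⟨w⟩ := (hdec.bag_conn v).preconnected ⟨y, hvy⟩ ⟨x, hvx⟩
  have hx' : x ∉ T.branch b a :=
    Set.disjoint_left.1 (hdec.isTree.isAcyclic.disjoint_branch hab) hx
  -- a walk through the nodes whose bags contain `v` must leave `T.branch b a` along `ab`
  obtain ⟨d, -, hd₁, hd₂⟩ :=
    w.exists_boundary_dart {z : ↥{x | v ∈ β x} | z.val ∈ T.branch b a} hy hx'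
  have hd : s(↑d.fst, ↑d.snd) = s(b, a) := by
    by_contra hne
    exact hd₂ (mem_branch_of_adj hd₁ d.adj hne)
  rcases Sym2.eq_iff.1 hd with ⟨h₁, h₂⟩ | ⟨h₁, h₂⟩
  · exact ⟨h₂ ▸ d.snd.2, h₁ ▸ d.fst.2⟩
  · exact ⟨h₁ ▸ d.fst.2, h₂ ▸ d.snd.2⟩

def piece (T : SimpleGraph α) (β : α → Set V) (a b : α) : Set V :=
  {v | v ∉ β a ∧ ∃ x ∈ T.branch a b, v ∈ β x}

theorem piece_subset_piece (hdec : IsTreeDecomp G T β) (hab : T.Adj a b) (hbc : T.Adj b c)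
    (hca : c ≠ a) : piece T β b c ⊆ piece T β a b := by
  rintro v ⟨hvb, x, hx, hvx⟩
  have hx' := hdec.isTree.isAcyclic.branch_subset_branch hab hbc hca hx
  exact ⟨fun hva => hvb (hdec.mem_inter_of_mem_branch hab hx' mem_branch_self hvx hva).2,
    x, hx', hvx⟩

theorem disjoint_piece (hdec : IsTreeDecomp G T β) (hab : T.Adj a b) (hab' : T.Adj a b')
    (hne : b ≠ b') : Disjoint (piece T β a b) (piece T β a b') := by
  rw [Set.disjoint_left]
  rintro v ⟨hva, x, hx, hvx⟩ ⟨-, y, hy, hvy⟩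
  have hy' := hdec.isTree.isAcyclic.branch_subset_branch hab.symm hab' hne.symm hy
  exact hva (hdec.mem_inter_of_mem_branch hab hx hy' hvx hvy).1

theorem disjoint_piece_swap (hdec : IsTreeDecomp G T β) (hab : T.Adj a b) :
    Disjoint (piece T β a b) (piece T β b a) := by
  rw [Set.disjoint_left]
  rintro v ⟨hva, x, hx, hvx⟩ ⟨-, y, hy, hvy⟩
  exact hva (hdec.mem_inter_of_mem_branch hab hx hy hvx hvy).1

theorem compl_union_piece_subset (hdec : IsTreeDecomp G T β) (hab : T.Adj a b) :
    (piece T β a b ∪ piece T β b a)ᶜ ⊆ β a := by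
  intro v hv
  simp only [Set.mem_compl_iff, Set.mem_union, not_or] at hv
  obtain ⟨x, hvx⟩ := hdec.mem_bag v
  by_contra hva
  rcases hdec.isTree.connected.mem_branch_or a b x with hx | hx
  · exact hv.1 ⟨hva, x, hx, hvx⟩
  · have hvb : v ∈ β b := by
      by_contra hvb
      exact hv.2 ⟨hvb, x, hx, hvx⟩
    exact hva (hdec.mem_inter_of_mem_branch hab mem_branch_self hx hvb hvx).1

theorem sUnion_pieces (hdec : IsTreeDecomp G T β) (a : α) :
    ⋃₀ (piece T β a '' T.neighborSet a) = (β a)ᶜ := by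
  ext v
  simp only [Set.sUnion_image, Set.mem_iUnion, mem_neighborSet, exists_prop,
    Set.mem_compl_iff]
  constructor
  · rintro ⟨b, -, hv⟩
    exact hv.1
  · intro hva
    obtain ⟨x, hvx⟩ := hdec.mem_bag v
    have hxa : x ≠ a := by
      rintro rfl
      exact hva hvx
    obtain ⟨b, hab, hx⟩ := hdec.isTree.connected.exists_adj_mem_branch hxa
    exact ⟨b, hab, hva, x, hx, hvx⟩

theorem pairwiseDisjoint_pieces (hdec : IsTreeDecomp G T β) (a : α) :
    (piece T β a '' T.neighborSet a).PairwiseDisjoint id := by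
  rintro _ ⟨b, hab, rfl⟩ _ ⟨b', hab', rfl⟩ hne
  exact hdec.disjoint_piece hab hab' fun h => hne (h ▸ rfl)

theorem mem_piece_of_adj (hdec : IsTreeDecomp G T β) (hab : T.Adj a b)
    (hu : u ∈ piece T β a b) (huv : G.Adj u v) (hva : v ∉ β a) : v ∈ piece T β a b := by
  obtain ⟨x, hux, hvx⟩ := hdec.edge_bag huv
  rcases hdec.isTree.connected.mem_branch_or a b x with hx | hx
  · exact ⟨hva, x, hx, hvx⟩
  · obtain ⟨hua, y, hy, huy⟩ := hu
    exact absurd (hdec.mem_inter_of_mem_branch hab hy hx huy hux).1 hua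

noncomputable def bagDist (T : SimpleGraph α) (β : α → Set V) (b : α) (v : V) : ℕ :=
  sInf {n | ∃ x, ∃ p : T.Walk b x, v ∈ β x ∧ p.length = n}

theorem bagDist_lt (hdec : IsTreeDecomp G T β) (hbc : T.Adj b c) (hv : v ∈ piece T β b c) :
    bagDist T β c v < bagDist T β b v := by
  classical
  obtain ⟨x, hvx⟩ := hdec.mem_bag v
  obtain ⟨y, p, hvy, hp⟩ := Nat.sInf_mem
    (s := {n | ∃ x, ∃ p : T.Walk b x, v ∈ β x ∧ p.length = n})
    ⟨_, x, (hdec.isTree.connected b x).some, hvx, rfl⟩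
  have hc : c ∈ p.support := by
    by_contra hc
    have hy : y ∈ T.branch c b := ⟨p, fun h => hc (p.fst_mem_support_of_mem_edges h)⟩
    obtain ⟨hvb, z, hz, hvz⟩ := hv
    exact hvb (hdec.mem_inter_of_mem_branch hbc hz hy hvz hvy).1
  calc bagDist T β c v ≤ (p.dropUntil c hc).length := Nat.sInf_le ⟨y, _, hvy, rfl⟩
    _ < p.length := Walk.length_dropUntil_lt_length hc hbc.ne.symm
    _ = bagDist T β b v := hp

theorem exists_forall_not_heavy [Finite V] (hdec : IsTreeDecomp G T β) (heavy : Set V → Prop)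
    (hempty : ¬ heavy ∅)
    (hflip : ∀ a b, T.Adj a b → heavy (piece T β a b) → ¬ heavy (piece T β b a)) :
    ∃ a, ∀ b, T.Adj a b → ¬ heavy (piece T β a b) := by
  by_contra! hbad
  let μ : α × α → ℕ := fun e =>
    ∑ v ∈ (Set.toFinite (piece T β e.1 e.2)).toFinset, bagDist T β e.2 v
  obtain ⟨a₀⟩ := hdec.isTree.connected.nonempty
  obtain ⟨b₀, hb₀⟩ := hbad a₀
  obtain ⟨⟨a, b⟩, ⟨hab, hheavy⟩, hmin⟩ := (measure μ).wf.has_min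
    {e | T.Adj e.1 e.2 ∧ heavy (piece T β e.1 e.2)} ⟨(a₀, b₀), hb₀⟩
  obtain ⟨c, hbc, hc⟩ := hbad b
  have hca : c ≠ a := fun h => hflip a b hab hheavy (h ▸ hc)
  have hne : (piece T β b c).Nonempty := by
    rw [Set.nonempty_iff_ne_empty]
    exact fun h => hempty (h ▸ hc)
  refine hmin (b, c) ⟨hbc, hc⟩ ?_
  calc μ (b, c) < ∑ v ∈ (Set.toFinite (piece T β b c)).toFinset, bagDist T β b v :=
        Finset.sum_lt_sum_of_nonempty (by simpa using hne)
          fun v hv => hdec.bagDist_lt hbc (by simpa using hv)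
    _ ≤ μ (a, b) := Finset.sum_le_sum_of_subset
          (Set.Finite.toFinset_subset_toFinset.2 (hdec.piece_subset_piece hab hbc hca))

theorem exists_union_pieces_sum_mem_Icc [Finite V] (hdec : IsTreeDecomp G T β) (f : V → ℝ)
    {c : ℝ} (hc : 0 ≤ c) (ha : ∀ b, T.Adj a b → ∑ᶠ v ∈ piece T β a b, f v ≤ 2 * c)
    (htot : c ≤ ∑ᶠ v ∈ (β a)ᶜ, f v) :
    ∃ P : Set V, (∀ u ∈ P, ∀ v, G.Adj u v → v ∉ β a → v ∈ P) ∧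
      c ≤ ∑ᶠ v ∈ P, f v ∧ ∑ᶠ v ∈ P, f v ≤ 2 * c := by
  set 𝒟 := piece T β a '' T.neighborSet a
  have hsum : ∀ 𝒰 ⊆ 𝒟, ∑ᶠ v ∈ ⋃₀ 𝒰, f v = ∑ᶠ D ∈ 𝒰, ∑ᶠ v ∈ D, f v := fun 𝒰 h𝒰 =>
    finsum_mem_sUnion ((hdec.pairwiseDisjoint_pieces a).subset h𝒰) (Set.toFinite _)
      fun D _ => Set.toFinite D
  obtain ⟨𝒰, h𝒰, hlo, hhi⟩ := (Set.toFinite 𝒟).toFinset.exists_subset_sum_mem_Icc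
    (fun D => ∑ᶠ v ∈ D, f v) hc
    (by
      intro D hD
      obtain ⟨b, hab, rfl⟩ := (Set.Finite.mem_toFinset _).1 hD
      exact ha b hab)
    (by rwa [← finsum_mem_coe_finset, Set.Finite.coe_toFinset, ← hsum 𝒟 subset_rfl,
      hdec.sUnion_pieces])
  rw [Set.Finite.subset_toFinset] at h𝒰
  refine ⟨⋃₀ 𝒰, ?_, ?_, ?_⟩
  · rintro u ⟨D, hD, hu⟩ v huv hva
    obtain ⟨b, hab, rfl⟩ := h𝒰 hD
    exact ⟨_, hD, hdec.mem_piece_of_adj hab hu huv hva⟩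
  · rwa [hsum _ h𝒰, finsum_mem_coe_finset]
  · rwa [hsum _ h𝒰, finsum_mem_coe_finset]

theorem exists_balanced_separation [Fintype V] (hdec : IsTreeDecomp G T β) {t : ℕ}
    (hbag : ∀ a, (β a).ncard ≤ t + 1) (lam : V → ℝ) (hlam : ∀ v, |lam v| ≤ 1)
    (hsum : 3 * (t : ℝ) + 3 ≤ ∑ v, lam v) :
    ∃ K L : Set V, G.IsSeparation K L ∧
      (1 / 3 : ℝ) * (∑ v, lam v) ≤ ∑ᶠ v ∈ K \ L, lam v ∧
      ∑ᶠ v ∈ K \ L, lam v ≤ (2 / 3 : ℝ) * (∑ v, lam v) ∧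
      (K ∩ L).ncard ≤ t + 1 := by
  set S := ∑ v, lam v
  have hsmall : ∀ a, ∀ X ⊆ β a, |∑ᶠ v ∈ X, lam v| ≤ t + 1 := fun a X hX =>
    (abs_finsum_mem_le_ncard X.toFinite fun v _ => hlam v).trans
      (by exact_mod_cast (Set.ncard_le_ncard hX).trans (hbag a))
  have hcompl : ∀ X : Set V, ∑ᶠ v ∈ Xᶜ, lam v = S - ∑ᶠ v ∈ X, lam v := fun X => by
    rw [eq_sub_iff_add_eq', Set.compl_eq_univ_sdiff,
      finsum_mem_add_sdiff (Set.subset_univ X) Set.finite_univ, finsum_mem_univ,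
      finsum_eq_sum_of_fintype]
  have hflip : ∀ a b, T.Adj a b → 2 * S / 3 < ∑ᶠ v ∈ piece T β a b, lam v →
      ¬ 2 * S / 3 < ∑ᶠ v ∈ piece T β b a, lam v := by
    intro a b hab h₁ h₂
    have hrest := abs_le.1 (hsmall a _ (hdec.compl_union_piece_subset hab))
    rw [hcompl, finsum_mem_union (hdec.disjoint_piece_swap hab) (Set.toFinite _)
      (Set.toFinite _)] at hrest
    linarith
  obtain ⟨a, ha⟩ := hdec.exists_forall_not_heavy (fun D => 2 * S / 3 < ∑ᶠ v ∈ D, lam v)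
    (by simp only [finsum_mem_empty, not_lt]; linarith) hflip
  obtain ⟨P, hP, hlo, hhi⟩ := hdec.exists_union_pieces_sum_mem_Icc lam (c := S / 3)
    (by linarith) (fun b hab => by linarith [not_lt.1 (ha b hab)])
    (by rw [hcompl]; linarith [abs_le.1 (hsmall a _ subset_rfl)])
  have hdiff : (P ∪ β a) \ Pᶜ = P := by
    rw [Set.sdiff_compl, Set.union_inter_cancel_left]
  refine ⟨P ∪ β a, Pᶜ, isSeparation_union_compl hP, ?_, ?_, ?_⟩
  · rw [hdiff]
    linarith
  · rw [hdiff]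
    linarith
  · refine (Set.ncard_le_ncard fun v hv => ?_).trans (hbag a)
    exact hv.1.resolve_left hv.2

end IsTreeDecomp

/-- Let `H` have tree-width at most `t` and let `λ : V(H) → ℝ` satisfy `|λ(v)| ≤ 1` for
every vertex.  If `Σ_v λ(v) ≥ 3t + 3`, then there is a separation `(K, L)` of `H` with
`(1/3)·Σ λ ≤ Σ_{v ∈ K \ L} λ(v) ≤ (2/3)·Σ λ` and `|K ∩ L| ≤ t + 1`. -/
theorem stmt_9 {V : Type} [Fintype V] (t : ℕ) (H : SimpleGraph V)
    (htw : treewidth H ≤ (t : ℕ∞))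
    (lam : V → ℝ) (hlam : ∀ v, |lam v| ≤ 1)
    (hsum : 3 * (t : ℝ) + 3 ≤ ∑ v, lam v) :
    ∃ K L : Set V, K ∪ L = Set.univ ∧
      (∀ u ∈ K \ L, ∀ v ∈ L \ K, ¬ H.Adj u v) ∧
      (1 / 3 : ℝ) * (∑ v, lam v) ≤ ∑ᶠ v ∈ K \ L, lam v ∧
      ∑ᶠ v ∈ K \ L, lam v ≤ (2 / 3 : ℝ) * (∑ v, lam v) ∧
      (K ∩ L).ncard ≤ t + 1 := by
  obtain ⟨α, T, β, hdec, hbag⟩ := hasTWDecomp_of_treewidth_le htw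
  obtain ⟨K, L, ⟨hcover, hsep⟩, hlo, hhi, hcard⟩ :=
    hdec.exists_balanced_separation (fun a => (hbag a).2) lam hlam hsum
  exact ⟨K, L, hcover, hsep, hlo, hhi, hcard⟩
end

section
/- Let b ≥ 0 and N ≥ 1 be integers, let P be a staircase in Q_N, and let G be the b-enlargement of P, with left side S₁ and right side S₂. If X ⊆ V(G) is a set that intersects every path in G from S₁ to S₂, and X is minimal with this property (no proper subset of X intersects every such path), then the subgraph of G induced by X is connected. -/
open SimpleGraph

abbrev V3 : Type := ℤ × ℤ × ℤ

/-- `u` steps to `v`: each coordinate is non-decreasing and increases by at most 1. -/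
def stepRel (u v : V3) : Prop :=
  u.1 ≤ v.1 ∧ v.1 ≤ u.1 + 1 ∧
  u.2.1 ≤ v.2.1 ∧ v.2.1 ≤ u.2.1 + 1 ∧
  u.2.2 ≤ v.2.2 ∧ v.2.2 ≤ u.2.2 + 1

/-- membership in the vertex set `{0,…,n-1}³` of the cube `Q_n`. -/
def inCube (n : ℕ) (u : V3) : Prop :=
  0 ≤ u.1 ∧ u.1 ≤ (n : ℤ) - 1 ∧
  0 ≤ u.2.1 ∧ u.2.1 ≤ (n : ℤ) - 1 ∧
  0 ≤ u.2.2 ∧ u.2.2 ≤ (n : ℤ) - 1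

/-- the vertex set of the cube `Q_n`. -/
def cubeBox (n : ℕ) : Set V3 := {u | inCube n u}

/-- The graph `Q_n`: the `n × n × n` grid with all non-decreasing diagonals. -/
def cubeGraph (n : ℕ) : SimpleGraph V3 where
  Adj u v := u ≠ v ∧ inCube n u ∧ inCube n v ∧ (stepRel u v ∨ stepRel v u)
  symm := ⟨by rintro u v ⟨h1, h2, h3, h4⟩; exact ⟨h1.symm, h3, h2, h4.symm⟩⟩
  loopless := ⟨by rintro u ⟨h, -⟩; exact h rfl⟩

/-- A staircase in `Q_N`: a path whose first coordinate increases by exactly 1 at each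
step and whose other two coordinates are non-decreasing. -/
structure Staircase (N : ℕ) where
  k : ℕ
  v : Fin (k + 1) → V3
  mem : ∀ i, inCube N (v i)
  adj : ∀ i : Fin k, (cubeGraph N).Adj (v i.castSucc) (v i.succ)
  step_x : ∀ i : Fin k, (v i.succ).1 = (v i.castSucc).1 + 1
  mono_y : ∀ i : Fin k, (v i.castSucc).2.1 ≤ (v i.succ).2.1
  mono_z : ∀ i : Fin k, (v i.castSucc).2.2 ≤ (v i.succ).2.2

/-- The first vertex of a staircase. -/
def Staircase.first {N : ℕ} (P : Staircase N) : V3 := P.v 0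

/-- The last vertex of a staircase. -/
def Staircase.last {N : ℕ} (P : Staircase N) : V3 := P.v (Fin.last P.k)

/-- The `b`-square around a vertex `u`: `{(x, y+dy, z+dz) : 0 ≤ dy, dz ≤ b}`,
intersected with the vertex set of `Q_N`. -/
def square (N : ℕ) (u : V3) (b : ℕ) : Set V3 :=
  {w | inCube N w ∧ w.1 = u.1 ∧
    u.2.1 ≤ w.2.1 ∧ w.2.1 ≤ u.2.1 + (b : ℤ) ∧
    u.2.2 ≤ w.2.2 ∧ w.2.2 ≤ u.2.2 + (b : ℤ)}

/-- The vertex set of the `b`-enlargement of a staircase `P`. -/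
def enlargeSet (N b : ℕ) (P : Staircase N) : Set V3 :=
  ⋃ i : Fin (P.k + 1), square N (P.v i) b

/-- `Y` intersects every path of the `b`-enlargement of `P` joining its left side
to its right side.  (Paths of the enlargement are exactly the paths of `Q_N` whose
support is contained in the vertex set of the enlargement.) -/
def BlocksSet (N b : ℕ) (P : Staircase N) (Y : Set V3) : Prop :=
  ∀ u w : V3, u ∈ square N P.first b → w ∈ square N P.last b →
    ∀ p : (cubeGraph N).Walk u w, p.IsPath →
      (∀ x ∈ p.support, x ∈ enlargeSet N b P) →
      ∃ x ∈ Y, x ∈ p.support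


/-!
Suppose `G[X]` splits as `X = A ∪ B` with `A, B` nonempty and no edge between them. Let `R` be
the set of vertices reachable from the left side without meeting `X`, and let `c` be the
`ℤ/2`-valued edge function that is `1` exactly on edges between `R` and `A`. On `R ∪ X` it is
the coboundary of the indicator of `A`, and off `R` it vanishes; as no edge leaves `R` except
into `X`, every triangle lies in one of these two regions, so `c` is a cocycle.

The enlargement is simply connected: sending each vertex of a square to the nearest vertex of
the previous square, every edge closes a triangle with such parent edges, so summing `c` along
parent chains gives a potential `g` with `δg = c` and `g = 1_A` on the left side. Then `g = 0`
at the end of a path avoiding `A`, `g = 1` at the end of a path avoiding `B`, and `g` is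
constant on the right side, which is connected and misses `R`. So `A` or `B` alone meets every
path, against the minimality of `X`.
-/

namespace SimpleGraph

variable {V : Type*} {G : SimpleGraph V}

theorem Walk.apply_eq_of_forall_adj {β : Type*} {T : Set V} {f : V → β}
    (hf : ∀ u ∈ T, ∀ v ∈ T, G.Adj u v → f u = f v) {u v : V} (q : G.Walk u v)
    (hq : ∀ x ∈ q.support, x ∈ T) : f u = f v := by
  induction q with
  | nil => rfl
  | cons huv q ih =>
    simp only [Walk.support_cons, List.mem_cons, forall_eq_or_imp] at hq
    exact (hf _ hq.1 _ (hq.2 _ q.start_mem_support) huv).trans (ih hq.2)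

variable (G) in
def reachableWithin (T S : Set V) : Set V :=
  {v | ∃ s ∈ S, ∃ q : G.Walk s v, ∀ x ∈ q.support, x ∈ T}

section reachableWithin

variable {T S : Set V}

theorem reachableWithin_subset : G.reachableWithin T S ⊆ T :=
  fun _ ⟨_, _, q, hq⟩ => hq _ q.end_mem_support

theorem inter_subset_reachableWithin : S ∩ T ⊆ G.reachableWithin T S :=
  fun v hv => ⟨v, hv.1, .nil, by simpa using hv.2⟩

theorem mem_reachableWithin_of_adj {r v : V} (hr : r ∈ G.reachableWithin T S) (hv : v ∈ T)
    (hrv : G.Adj r v) : v ∈ G.reachableWithin T S := by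
  obtain ⟨s, hs, q, hq⟩ := hr
  refine ⟨s, hs, q.concat hrv, fun x hx => ?_⟩
  rw [Walk.support_concat, List.mem_append, List.mem_singleton] at hx
  rcases hx with hx | rfl
  exacts [hq x hx, hv]

theorem disjoint_reachableWithin_diff {E X : Set V} : Disjoint (G.reachableWithin (E \ X) S) X :=
  Set.disjoint_left.2 fun _ hr => (reachableWithin_subset hr).2

theorem mem_reachableWithin_diff_or_mem {E X : Set V} {r v : V}
    (hr : r ∈ G.reachableWithin (E \ X) S) (hv : v ∈ E) (hrv : G.Adj r v) :
    v ∈ G.reachableWithin (E \ X) S ∪ X :=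
  (em (v ∈ X)).elim .inr fun hvX => .inl (mem_reachableWithin_of_adj hr ⟨hv, hvX⟩ hrv)

theorem subset_reachableWithin_diff_union {E X : Set V} (hS : S ⊆ E) :
    S ⊆ G.reachableWithin (E \ X) S ∪ X := fun v hv =>
  (em (v ∈ X)).elim .inr fun hvX => .inl (inter_subset_reachableWithin ⟨hv, hS hv, hvX⟩)

end reachableWithin

variable (G) in
def Separates (E S₁ S₂ Y : Set V) : Prop :=
  ∀ u w : V, u ∈ S₁ → w ∈ S₂ → ∀ p : G.Walk u w, p.IsPath →
    (∀ x ∈ p.support, x ∈ E) → ∃ x ∈ Y, x ∈ p.support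

section Separates

variable {E S₁ S₂ Y : Set V}

theorem Separates.exists_mem_support (hY : G.Separates E S₁ S₂ Y) {u w : V} (hu : u ∈ S₁)
    (hw : w ∈ S₂) (p : G.Walk u w) (hp : ∀ x ∈ p.support, x ∈ E) :
    ∃ x ∈ Y, x ∈ p.support := by
  classical
  obtain ⟨x, hxY, hx⟩ := hY u w hu hw p.bypass p.bypass_isPath
    fun x hx => hp x (p.support_bypass_subset_support hx)
  exact ⟨x, hxY, p.support_bypass_subset_support hx⟩

theorem Separates.disjoint_reachableWithin (hY : G.Separates E S₁ S₂ Y) :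
    Disjoint (G.reachableWithin (E \ Y) S₁) S₂ := by
  refine Set.disjoint_left.2 fun w ⟨s, hs, q, hq⟩ hw => ?_
  obtain ⟨x, hxY, hx⟩ := hY.exists_mem_support hs hw q fun x hx => (hq x hx).1
  exact (hq x hx).2 hxY

end Separates

variable (G) in
def IsTriangleCocycle {α : Type*} [AddCommGroup α] (E : Set V) (c : V → V → α) : Prop :=
  ∀ u ∈ E, ∀ v ∈ E, ∀ w ∈ E, G.Adj u v → G.Adj v w → G.Adj u w → c u w = c u v + c v w

variable (G) in
def CocyclesAreCoboundaries (E S : Set V) (α : Type*) [AddCommGroup α] : Prop :=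
  ∀ c : V → V → α, (∀ u v, c v u = -c u v) → G.IsTriangleCocycle E c →
    ∀ f : V → α, (∀ u ∈ S, ∀ v ∈ S, G.Adj u v → f v - f u = c u v) →
    ∃ g : V → α, (∀ v ∈ S, g v = f v) ∧ ∀ u ∈ E, ∀ v ∈ E, G.Adj u v → g v - g u = c u v

variable (G) in
structure IsTriangulatingParent (E : Set V) (h : V → ℕ) (p : V → V) : Prop where
  parent_mem : ∀ v ∈ E, h v ≠ 0 → p v ∈ E
  level_parent : ∀ v ∈ E, h v ≠ 0 → h (p v) + 1 = h v
  adj_parent : ∀ v ∈ E, h v ≠ 0 → G.Adj (p v) v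
  level_le : ∀ u ∈ E, ∀ v ∈ E, G.Adj u v → h v ≤ h u + 1
  up_edge : ∀ u ∈ E, ∀ v ∈ E, G.Adj u v → h v = h u + 1 → p v = u ∨ G.Adj u (p v)
  flat_edge : ∀ u ∈ E, ∀ v ∈ E, G.Adj u v → h u = h v → h u ≠ 0 →
    G.Adj (p u) v ∨ G.Adj (p v) u

section levelPotential

variable {α : Type*} [AddCommGroup α] {E : Set V} {h : V → ℕ} {p : V → V} {f : V → α}
  {c : V → V → α} {u v : V}

def parentPotential (p : V → V) (f : V → α) (c : V → V → α) : ℕ → V → α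
  | 0, v => f v
  | n + 1, v => parentPotential p f c n (p v) + c (p v) v

def levelPotential (h : V → ℕ) (p : V → V) (f : V → α) (c : V → V → α) (v : V) : α :=
  parentPotential p f c (h v) v

theorem levelPotential_of_level_eq_zero (hv : h v = 0) : levelPotential h p f c v = f v := by
  simp [levelPotential, hv, parentPotential]

namespace IsTriangulatingParent

theorem levelPotential_eq_parent (H : G.IsTriangulatingParent E h p) (hv : v ∈ E)
    (h0 : h v ≠ 0) :
    levelPotential h p f c v = levelPotential h p f c (p v) + c (p v) v := by
  simp only [levelPotential, ← H.level_parent v hv h0, parentPotential]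

theorem levelPotential_sub_of_up (H : G.IsTriangulatingParent E h p)
    (hc : G.IsTriangleCocycle E c) (hu : u ∈ E) (hv : v ∈ E) (huv : G.Adj u v)
    (hlev : h v = h u + 1)
    (hlow : G.Adj u (p v) →
      levelPotential h p f c (p v) - levelPotential h p f c u = c u (p v)) :
    levelPotential h p f c v - levelPotential h p f c u = c u v := by
  have hv0 : h v ≠ 0 := by omega
  rw [H.levelPotential_eq_parent hv hv0]
  rcases H.up_edge u hu v hv huv hlev with hpu | hadj
  · rw [hpu]
    abel
  · rw [hc u hu (p v) (H.parent_mem v hv hv0) v hv hadj (H.adj_parent v hv hv0) huv,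
      ← hlow hadj]
    abel

theorem levelPotential_sub_of_flat (H : G.IsTriangulatingParent E h p)
    (hanti : ∀ u v, c v u = -c u v) (hc : G.IsTriangleCocycle E c) (hu : u ∈ E) (hv : v ∈ E)
    (huv : G.Adj u v) (hu0 : h u ≠ 0) (hadj : G.Adj (p u) v)
    (hlow : levelPotential h p f c v - levelPotential h p f c (p u) = c (p u) v) :
    levelPotential h p f c v - levelPotential h p f c u = c u v := by
  rw [H.levelPotential_eq_parent hu hu0,
    hc u hu (p u) (H.parent_mem u hu hu0) v hv (H.adj_parent u hu hu0).symm hadj huv,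
    hanti (p u) u, ← hlow]
  abel

theorem levelPotential_sub (H : G.IsTriangulatingParent E h p)
    (hanti : ∀ u v, c v u = -c u v) (hc : G.IsTriangleCocycle E c)
    (hf : ∀ u ∈ E, ∀ v ∈ E, h u = 0 → h v = 0 → G.Adj u v → f v - f u = c u v)
    (hu : u ∈ E) (hv : v ∈ E) (huv : G.Adj u v) :
    levelPotential h p f c v - levelPotential h p f c u = c u v := by
  induction hm : h u + h v using Nat.strong_induction_on generalizing u v with
  | _ m ih =>
  have hlow : ∀ {u' v'}, u' ∈ E → v' ∈ E → G.Adj u' v' → h u' + h v' < m →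
      levelPotential h p f c v' - levelPotential h p f c u' = c u' v' :=
    fun hu' hv' huv' hlt => ih _ hlt hu' hv' huv' rfl
  have hparent : ∀ {w}, w ∈ E → h w ≠ 0 → h (p w) + 1 = h w := H.level_parent _
  have hle := H.level_le u hu v hv huv
  have hle' := H.level_le v hv u hu huv.symm
  rcases (by omega : h u = 0 ∧ h v = 0 ∨ h v = h u + 1 ∨ h u = h v + 1 ∨ h u = h v ∧ h u ≠ 0)
    with ⟨hu0, hv0⟩ | hup | hdown | ⟨hflat, hu0⟩
  · rw [levelPotential_of_level_eq_zero hu0, levelPotential_of_level_eq_zero hv0]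
    exact hf u hu v hv hu0 hv0 huv
  · exact H.levelPotential_sub_of_up hc hu hv huv hup fun hadj =>
      hlow hu (H.parent_mem v hv (by omega)) hadj (by have := hparent hv (by omega); omega)
  · rw [hanti v u, ← H.levelPotential_sub_of_up hc hv hu huv.symm hdown fun hadj =>
      hlow hv (H.parent_mem u hu (by omega)) hadj (by have := hparent hu (by omega); omega)]
    abel
  · rcases H.flat_edge u hu v hv huv hflat hu0 with hadj | hadj
    · exact H.levelPotential_sub_of_flat hanti hc hu hv huv hu0 hadj <|
        hlow (H.parent_mem u hu hu0) hv hadj (by have := hparent hu hu0; omega)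
    · have hv0 : h v ≠ 0 := by omega
      rw [hanti v u, ← H.levelPotential_sub_of_flat hanti hc hv hu huv.symm hv0 hadj <|
        hlow (H.parent_mem v hv hv0) hu hadj (by have := hparent hv hv0; omega)]
      abel

theorem subset_reachableWithin (H : G.IsTriangulatingParent E h p) :
    E ⊆ G.reachableWithin E {v ∈ E | h v = 0} := by
  intro v hv
  induction hn : h v generalizing v with
  | zero => exact inter_subset_reachableWithin ⟨⟨hv, hn⟩, hv⟩
  | succ n ih =>
    have h0 : h v ≠ 0 := by omega
    have hpv := ih (H.parent_mem v hv h0) (by have := H.level_parent v hv h0; omega)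
    exact mem_reachableWithin_of_adj hpv hv (H.adj_parent v hv h0)

theorem cocyclesAreCoboundaries (H : G.IsTriangulatingParent E h p) (α : Type*)
    [AddCommGroup α] : G.CocyclesAreCoboundaries E {v ∈ E | h v = 0} α :=
  fun _ hanti hc f hf => ⟨levelPotential h p f _,
    fun _ hv => levelPotential_of_level_eq_zero hv.2,
    fun _ hu _ hv => H.levelPotential_sub hanti hc
      (fun u hu v hv hu0 hv0 => hf u ⟨hu, hu0⟩ v ⟨hv, hv0⟩) hu hv⟩

end IsTriangulatingParent

end levelPotential

end SimpleGraph

section crossing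

variable {V : Type*} {R A X : Set V} {u v : V}

open Classical in
noncomputable def crossing (R A : Set V) (u v : V) : ZMod 2 :=
  if u ∈ R ∧ v ∈ A ∨ u ∈ A ∧ v ∈ R then 1 else 0

theorem crossing_comm (R A : Set V) (u v : V) : crossing R A v u = crossing R A u v := by
  unfold crossing
  split_ifs <;> first | rfl | tauto

theorem crossing_eq_zero_of_notMem_fst (hu : u ∉ R) (hv : v ∉ R) : crossing R A u v = 0 := by
  simp [crossing, hu, hv]

theorem crossing_eq_zero_of_notMem_snd (hu : u ∉ A) (hv : v ∉ A) : crossing R A u v = 0 := by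
  simp [crossing, hu, hv]

variable {G : SimpleGraph V}

theorem crossing_eq_indicator_sub (hRX : Disjoint R X) (hAX : A ⊆ X)
    (hAB : ∀ a ∈ A, ∀ x ∈ X \ A, ¬ G.Adj a x) (hu : u ∈ R ∪ X) (hv : v ∈ R ∪ X)
    (huv : G.Adj u v) : crossing R A u v = A.indicator 1 v - A.indicator 1 u := by
  have hRA : ∀ x ∈ R, x ∉ A := fun x hx hxA => Set.disjoint_left.1 hRX hx (hAX hxA)
  have hXR : ∀ x ∈ X, x ∉ R := fun x hx hxR => Set.disjoint_left.1 hRX hxR hx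
  have hvu := huv.symm
  unfold crossing
  by_cases huA : u ∈ A <;> by_cases hvA : v ∈ A <;> by_cases huR : u ∈ R <;>
    by_cases hvR : v ∈ R <;> simp_all

variable {E : Set V}

theorem isTriangleCocycle_crossing (hRX : Disjoint R X) (hAX : A ⊆ X)
    (hAB : ∀ a ∈ A, ∀ x ∈ X \ A, ¬ G.Adj a x) (hR : ∀ r ∈ R, ∀ v ∈ E, G.Adj r v → v ∈ R ∪ X) :
    G.IsTriangleCocycle E (crossing R A) := by
  intro u hu v hv w hw huv hvw huw
  by_cases hall : u ∈ R ∪ X ∧ v ∈ R ∪ X ∧ w ∈ R ∪ X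
  · obtain ⟨hu', hv', hw'⟩ := hall
    rw [crossing_eq_indicator_sub hRX hAX hAB hu' hw' huw,
      crossing_eq_indicator_sub hRX hAX hAB hu' hv' huv,
      crossing_eq_indicator_sub hRX hAX hAB hv' hw' hvw]
    abel
  · have huR : u ∉ R := fun h => hall ⟨.inl h, hR u h v hv huv, hR u h w hw huw⟩
    have hvR : v ∉ R := fun h => hall ⟨hR v h u hu huv.symm, .inl h, hR v h w hw hvw⟩
    have hwR : w ∉ R := fun h => hall ⟨hR w h u hu huw.symm, hR w h v hv hvw.symm, .inl h⟩
    simp [crossing_eq_zero_of_notMem_fst, huR, hvR, hwR]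

theorem indicator_compl_union_diff {M : Type*} [Zero M] [One M] {x : V} (hRX : Disjoint R X)
    (hAX : A ⊆ X) (hx : x ∈ R ∪ X) (hxB : x ∉ X \ A) :
    (R ∪ X \ A)ᶜ.indicator (1 : V → M) x = A.indicator 1 x := by
  have hRA : x ∈ R → x ∉ A := fun hxR hxA => Set.disjoint_left.1 hRX hxR (hAX hxA)
  by_cases hxR : x ∈ R <;> simp_all

theorem crossing_eq_indicator_compl_sub (hRX : Disjoint R X) (hAX : A ⊆ X)
    (hAB : ∀ a ∈ A, ∀ x ∈ X \ A, ¬ G.Adj a x) (hR : ∀ r ∈ R, ∀ v ∈ E, G.Adj r v → v ∈ R ∪ X)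
    (hu : u ∈ E \ (X \ A)) (hv : v ∈ E \ (X \ A)) (huv : G.Adj u v) :
    crossing R A u v = (R ∪ X \ A)ᶜ.indicator 1 v - (R ∪ X \ A)ᶜ.indicator 1 u := by
  by_cases h : u ∈ R ∪ X ∧ v ∈ R ∪ X
  · rw [crossing_eq_indicator_sub hRX hAX hAB h.1 h.2 huv,
      indicator_compl_union_diff hRX hAX h.1 hu.2, indicator_compl_union_diff hRX hAX h.2 hv.2]
  · have huR : u ∉ R := fun hu' => h ⟨.inl hu', hR u hu' v hv.1 huv⟩
    have hvR : v ∉ R := fun hv' => h ⟨hR v hv' u hu.1 huv.symm, .inl hv'⟩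
    simp [crossing_eq_zero_of_notMem_fst huR hvR, huR, hvR, hu.2, hv.2]

section potential

variable {G : SimpleGraph V} {E : Set V} {g : V → ZMod 2} {u v : V}

theorem eq_of_walk_of_notMem_snd
    (hg : ∀ u ∈ E, ∀ v ∈ E, G.Adj u v → g v - g u = crossing R A u v) (q : G.Walk u v)
    (hq : ∀ x ∈ q.support, x ∈ E \ A) : g u = g v :=
  q.apply_eq_of_forall_adj (fun x hx y hy hxy => by
    have := hg x hx.1 y hy.1 hxy
    rwa [crossing_eq_zero_of_notMem_snd hx.2 hy.2, sub_eq_zero, eq_comm] at this) hq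

theorem eq_of_walk_of_notMem_fst
    (hg : ∀ u ∈ E, ∀ v ∈ E, G.Adj u v → g v - g u = crossing R A u v) (q : G.Walk u v)
    (hq : ∀ x ∈ q.support, x ∈ E \ R) : g u = g v :=
  q.apply_eq_of_forall_adj (fun x hx y hy hxy => by
    have := hg x hx.1 y hy.1 hxy
    rwa [crossing_eq_zero_of_notMem_fst hx.2 hy.2, sub_eq_zero, eq_comm] at this) hq

theorem sub_indicator_eq_of_walk (hRX : Disjoint R X) (hAX : A ⊆ X)
    (hAB : ∀ a ∈ A, ∀ x ∈ X \ A, ¬ G.Adj a x) (hR : ∀ r ∈ R, ∀ v ∈ E, G.Adj r v → v ∈ R ∪ X)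
    (hg : ∀ u ∈ E, ∀ v ∈ E, G.Adj u v → g v - g u = crossing R A u v) (q : G.Walk u v)
    (hq : ∀ x ∈ q.support, x ∈ E \ (X \ A)) :
    g u - (R ∪ X \ A)ᶜ.indicator 1 u = g v - (R ∪ X \ A)ᶜ.indicator 1 v :=
  q.apply_eq_of_forall_adj (f := fun x => g x - (R ∪ X \ A)ᶜ.indicator 1 x)
    (fun x hx y hy hxy => by
    have := hg x hx.1 y hy.1 hxy
    rw [crossing_eq_indicator_compl_sub hRX hAX hAB hR hx hy hxy] at this
    linear_combination -this) hq

end potential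

end crossing

namespace SimpleGraph

variable {V : Type*} {G : SimpleGraph V} {E S₁ S₂ X A : Set V}

theorem exists_potential_crossing (hcob : G.CocyclesAreCoboundaries E S₁ (ZMod 2))
    (hS₁ : S₁ ⊆ E) (hAX : A ⊆ X) (hAB : ∀ a ∈ A, ∀ x ∈ X \ A, ¬ G.Adj a x) :
    ∃ g : V → ZMod 2, (∀ v ∈ S₁, g v = A.indicator 1 v) ∧ ∀ u ∈ E, ∀ v ∈ E, G.Adj u v →
      g v - g u = crossing (G.reachableWithin (E \ X) S₁) A u v := by
  have hS₁R := subset_reachableWithin_diff_union (G := G) (X := X) hS₁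
  refine hcob _ (fun u v => by rw [crossing_comm, ZMod.neg_eq_self_mod_two])
    (isTriangleCocycle_crossing disjoint_reachableWithin_diff hAX hAB
      fun _ hr _ => mem_reachableWithin_diff_or_mem hr) _
    fun u hu v hv huv => (crossing_eq_indicator_sub disjoint_reachableWithin_diff hAX hAB
      (hS₁R hu) (hS₁R hv) huv).symm

theorem Separates.separates_or_separates_diff {s₂ : V}
    (hcob : G.CocyclesAreCoboundaries E S₁ (ZMod 2)) (hS₁ : S₁ ⊆ E) (hS₂ : S₂ ⊆ E)
    (hs₂ : S₂ ⊆ G.reachableWithin S₂ {s₂}) (hX : G.Separates E S₁ S₂ X) (hAX : A ⊆ X)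
    (hAB : ∀ a ∈ A, ∀ x ∈ X \ A, ¬ G.Adj a x) :
    G.Separates E S₁ S₂ A ∨ G.Separates E S₁ S₂ (X \ A) := by
  obtain ⟨g, hg₁, hg⟩ := exists_potential_crossing hcob hS₁ hAX hAB
  have hRS₂ := hX.disjoint_reachableWithin
  set R := G.reachableWithin (E \ X) S₁
  have hRX : Disjoint R X := disjoint_reachableWithin_diff
  by_contra! h
  simp only [Separates, not_forall, not_exists, not_and] at h
  obtain ⟨⟨u, w, hu, hw, p, -, hpE, hpA⟩, ⟨u', w', hu', hw', p', -, hpE', hpB⟩⟩ := h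
  have hgw : g w = 0 := by
    rw [← eq_of_walk_of_notMem_snd hg p fun x hx => ⟨hpE x hx, (hpA x · hx)⟩, hg₁ u hu,
      Set.indicator_of_notMem (hpA u · p.start_mem_support)]
  have hgw' : g w' = 1 := by
    have hp'B : ∀ x ∈ p'.support, x ∉ X \ A := fun x hx hxB => hpB x hxB hx
    have := sub_indicator_eq_of_walk hRX hAX hAB
      (fun _ hr _ => mem_reachableWithin_diff_or_mem hr) hg p' fun x hx => ⟨hpE' x hx, hp'B x hx⟩
    rwa [hg₁ u' hu', indicator_compl_union_diff hRX hAX (subset_reachableWithin_diff_union hS₁ hu')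
      (hp'B u' p'.start_mem_support), sub_self, Set.indicator_of_mem (fun h => h.elim
        (Set.disjoint_right.1 hRS₂ hw') (hp'B w' p'.end_mem_support)), Pi.one_apply, eq_comm,
      sub_eq_zero] at this
  have hS₂R : ∀ x ∈ S₂, x ∈ E \ R := fun x hx => ⟨hS₂ hx, Set.disjoint_right.1 hRS₂ hx⟩
  obtain ⟨_, rfl, q, hq⟩ := hs₂ hw
  obtain ⟨_, rfl, q', hq'⟩ := hs₂ hw'
  have := (eq_of_walk_of_notMem_fst hg q fun x hx => hS₂R x (hq x hx)).symm.trans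
    (eq_of_walk_of_notMem_fst hg q' fun x hx => hS₂R x (hq' x hx))
  rw [hgw, hgw'] at this
  exact absurd this (by decide)

theorem connected_induce_of_minimal_separator {s₂ : V}
    (hcob : G.CocyclesAreCoboundaries E S₁ (ZMod 2)) (hS₁ : S₁ ⊆ E) (hS₂ : S₂ ⊆ E)
    (hs₂ : S₂ ⊆ G.reachableWithin S₂ {s₂}) (hE : (G.reachableWithin E S₁ ∩ S₂).Nonempty)
    (hX : G.Separates E S₁ S₂ X) (hmin : ∀ Y, Y ⊂ X → ¬ G.Separates E S₁ S₂ Y) :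
    (G.induce X).Connected := by
  obtain ⟨w, ⟨s, hs, q, hq⟩, hw⟩ := hE
  obtain ⟨x₀, hx₀, -⟩ := hX.exists_mem_support hs hw q hq
  refine (connected_iff _).2 ⟨fun x y => ?_, ⟨⟨x₀, hx₀⟩⟩⟩
  let A : Set V := {v | ∃ hv : v ∈ X, (G.induce X).Reachable x ⟨v, hv⟩}
  have hAX : A ⊆ X := fun v ⟨hv, _⟩ => hv
  have hxA : (x : V) ∈ A := ⟨x.2, .rfl⟩
  have hAB : ∀ a ∈ A, ∀ v ∈ X \ A, ¬ G.Adj a v := fun a ⟨ha, hxa⟩ v ⟨hv, hvA⟩ hav =>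
    hvA ⟨hv, hxa.trans (induce_adj.2 hav).reachable⟩
  rcases hX.separates_or_separates_diff hcob hS₁ hS₂ hs₂ hAX hAB with hA | hB
  · obtain ⟨_, hy⟩ : (y : V) ∈ A := by_contra fun hyA =>
      hmin A ((Set.ssubset_iff_of_subset hAX).2 ⟨y, y.2, hyA⟩) hA
    exact hy
  · refine (hmin _ ?_ hB).elim
    exact (Set.ssubset_iff_of_subset Set.sdiff_subset).2 ⟨x, x.2, fun h => h.2 hxA⟩

end SimpleGraph

/-- Only the upper bounds of `square N s b` need clamping: for `w` in the next square of a
staircase, the lower bounds and the bounds of the cube hold already. -/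
def clampBelow (s : V3) (b : ℕ) (w : V3) : V3 :=
  (w.1 - 1, min w.2.1 (s.2.1 + b), min w.2.2 (s.2.2 + b))

section clampBelow

variable {N b : ℕ} {s s' u w : V3}

theorem clampBelow_mem_square (hs : inCube N s) (hss : stepRel s s') (hx : s'.1 = s.1 + 1)
    (hw : w ∈ square N s' b) : clampBelow s b w ∈ square N s b := by
  simp only [square, stepRel, inCube, clampBelow, Set.mem_ofPred_eq] at *
  omega

theorem clampBelow_stepRel_self (hss : stepRel s s') (hw : w ∈ square N s' b) :
    stepRel (clampBelow s b w) w := by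
  simp only [square, stepRel, inCube, clampBelow, Set.mem_ofPred_eq] at *
  omega

theorem stepRel_clampBelow_of_mem_square (hss : stepRel s s') (hx : s'.1 = s.1 + 1)
    (hu : u ∈ square N s b) (hw : w ∈ square N s' b) (huw : stepRel u w) :
    stepRel u (clampBelow s b w) := by
  simp only [square, stepRel, inCube, clampBelow, Set.mem_ofPred_eq] at *
  omega

theorem clampBelow_stepRel_of_stepRel (hss : stepRel s s') (hu : u ∈ square N s' b)
    (hw : w ∈ square N s' b) (huw : stepRel u w) : stepRel (clampBelow s b u) w := by
  simp only [square, stepRel, inCube, clampBelow, Set.mem_ofPred_eq] at *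
  omega

end clampBelow

theorem self_mem_square {N b : ℕ} {s : V3} (hs : inCube N s) : s ∈ square N s b :=
  ⟨hs, rfl, le_rfl, by omega, le_rfl, by omega⟩

theorem square_subset_reachableWithin {N b : ℕ} {s : V3} (hs : inCube N s) :
    square N s b ⊆ (cubeGraph N).reachableWithin (square N s b) {s} := by
  rintro ⟨x, y, z⟩ hw
  induction hm : (y - s.2.1).toNat + (z - s.2.2).toNat using Nat.strong_induction_on
    generalizing y z with
  | _ m ih =>
  obtain ⟨hcube, hx, hy, hy', hz, hz'⟩ := hw
  dsimp only at hx hy hy' hz hz'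
  by_cases hyz : y = s.2.1 ∧ z = s.2.2
  · obtain rfl : ((x, y, z) : V3) = s := Prod.ext hx (Prod.ext hyz.1 hyz.2)
    exact SimpleGraph.inter_subset_reachableWithin ⟨rfl, self_mem_square hs⟩
  have hw' : ((x, max s.2.1 (y - 1), max s.2.2 (z - 1)) : V3) ∈ square N s b := by
    simp only [square, inCube, Set.mem_ofPred_eq] at *
    omega
  refine SimpleGraph.mem_reachableWithin_of_adj (ih _ (by omega) _ _ hw' rfl)
    ⟨hcube, hx, hy, hy', hz, hz'⟩ ⟨?_, hw'.1, hcube, .inl ?_⟩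
  · simp only [ne_eq, Prod.mk.injEq]
    omega
  · simp only [stepRel]
    omega

namespace Staircase

variable {N b : ℕ} (P : Staircase N)

def vertexAt (n : ℕ) : V3 := P.v ⟨min n P.k, by omega⟩

def level (w : V3) : ℕ := (w.1 - P.first.1).toNat

def parent (b : ℕ) (w : V3) : V3 := clampBelow (P.vertexAt (P.level w - 1)) b w

theorem square_subset_enlargeSet (i : Fin (P.k + 1)) : square N (P.v i) b ⊆ enlargeSet N b P :=
  Set.subset_iUnion (fun i => square N (P.v i) b) i

theorem vertexAt_val (i : Fin (P.k + 1)) : P.vertexAt i = P.v i := by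
  simp only [vertexAt]
  congr
  omega

theorem vertexAt_zero : P.vertexAt 0 = P.first := P.vertexAt_val 0

theorem vertexAt_castSucc (i : Fin P.k) : P.vertexAt i = P.v i.castSucc :=
  P.vertexAt_val i.castSucc

theorem vertexAt_succ (i : Fin P.k) : P.vertexAt (i + 1) = P.v i.succ :=
  P.vertexAt_val i.succ

theorem vertexAt_fst {n : ℕ} (hn : n ≤ P.k) : (P.vertexAt n).1 = P.first.1 + n := by
  induction n with
  | zero => simp [vertexAt_zero]
  | succ n ih =>
    rw [P.vertexAt_succ ⟨n, hn⟩, P.step_x, ← P.vertexAt_castSucc, ih (by omega)]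
    push_cast
    ring

theorem stepRel_vertexAt {n : ℕ} (hn : n < P.k) :
    stepRel (P.vertexAt n) (P.vertexAt (n + 1)) := by
  have hx := P.step_x ⟨n, hn⟩
  rw [P.vertexAt_succ ⟨n, hn⟩, P.vertexAt_castSucc ⟨n, hn⟩]
  refine (P.adj ⟨n, hn⟩).2.2.2.resolve_right fun h => ?_
  have := h.1
  omega

theorem vertexAt_succ_fst {n : ℕ} (hn : n < P.k) :
    (P.vertexAt (n + 1)).1 = (P.vertexAt n).1 + 1 := by
  rw [P.vertexAt_fst hn, P.vertexAt_fst hn.le]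
  push_cast
  ring

theorem level_eq_of_mem_square {n : ℕ} {w : V3} (hn : n ≤ P.k)
    (hw : w ∈ square N (P.vertexAt n) b) : P.level w = n := by
  have := P.vertexAt_fst hn
  have := hw.2.1
  simp only [level]
  omega

theorem mem_enlargeSet_iff {w : V3} :
    w ∈ enlargeSet N b P ↔ P.level w ≤ P.k ∧ w ∈ square N (P.vertexAt (P.level w)) b := by
  refine ⟨fun hw => ?_, fun ⟨hk, hw⟩ => Set.mem_iUnion.2 ⟨⟨P.level w, by omega⟩, ?_⟩⟩
  · obtain ⟨i, hi⟩ := Set.mem_iUnion.1 hw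
    rw [← P.vertexAt_val] at hi
    rw [P.level_eq_of_mem_square (by omega) hi]
    exact ⟨by omega, hi⟩
  · rwa [← P.vertexAt_val]

theorem setOf_level_eq_zero :
    {v ∈ enlargeSet N b P | P.level v = 0} = square N P.first b := by
  ext v
  refine ⟨fun ⟨hv, h0⟩ => ?_, fun hv => ⟨P.square_subset_enlargeSet 0 hv, ?_⟩⟩
  · have := (P.mem_enlargeSet_iff.1 hv).2
    rwa [h0, vertexAt_zero] at this
  · rw [← vertexAt_zero] at hv
    exact P.level_eq_of_mem_square (Nat.zero_le _) hv

theorem parent_spec {n : ℕ} {v : V3} (hv : v ∈ enlargeSet N b P) (hlev : P.level v = n + 1) :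
    n < P.k ∧ v ∈ square N (P.vertexAt (n + 1)) b ∧
      P.parent b v = clampBelow (P.vertexAt n) b v := by
  obtain ⟨hk, hsq⟩ := P.mem_enlargeSet_iff.1 hv
  rw [hlev] at hk hsq
  exact ⟨hk, hsq, by simp only [parent, hlev, Nat.add_sub_cancel]⟩

theorem parent_mem_square {n : ℕ} {v : V3} (hv : v ∈ enlargeSet N b P)
    (hlev : P.level v = n + 1) :
    P.parent b v ∈ square N (P.vertexAt n) b ∧ stepRel (P.parent b v) v := by
  obtain ⟨hk, hsq, hpar⟩ := P.parent_spec hv hlev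
  have hss := P.stepRel_vertexAt hk
  rw [hpar]
  exact ⟨clampBelow_mem_square (P.mem _) hss (P.vertexAt_succ_fst hk) hsq,
    clampBelow_stepRel_self hss hsq⟩

theorem parent_fst (v : V3) : (P.parent b v).1 = v.1 - 1 := rfl

theorem level_parent {n : ℕ} {v : V3} (hv : v ∈ enlargeSet N b P) (hlev : P.level v = n + 1) :
    P.level (P.parent b v) = n :=
  P.level_eq_of_mem_square (P.parent_spec hv hlev).1.le (P.parent_mem_square hv hlev).1

theorem parent_mem_enlargeSet {n : ℕ} {v : V3} (hv : v ∈ enlargeSet N b P)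
    (hlev : P.level v = n + 1) : P.parent b v ∈ enlargeSet N b P := by
  rw [P.mem_enlargeSet_iff, P.level_parent hv hlev]
  exact ⟨(P.parent_spec hv hlev).1.le, (P.parent_mem_square hv hlev).1⟩

theorem adj_parent {n : ℕ} {v : V3} (hv : v ∈ enlargeSet N b P) (hlev : P.level v = n + 1) :
    (cubeGraph N).Adj (P.parent b v) v :=
  ⟨ne_of_apply_ne Prod.fst (by rw [parent_fst]; omega), (P.parent_mem_square hv hlev).1.1,
    (P.parent_spec hv hlev).2.1.1, .inl (P.parent_mem_square hv hlev).2⟩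

theorem parent_eq_or_adj_of_level_succ {u v : V3} (hu : u ∈ enlargeSet N b P)
    (hv : v ∈ enlargeSet N b P) (huv : (cubeGraph N).Adj u v)
    (hlev : P.level v = P.level u + 1) :
    P.parent b v = u ∨ (cubeGraph N).Adj u (P.parent b v) := by
  obtain ⟨hk, hvsq, hpar⟩ := P.parent_spec hv hlev
  have husq := (P.mem_enlargeSet_iff.1 hu).2
  have hx : v.1 = u.1 + 1 := by rw [hvsq.2.1, husq.2.1, P.vertexAt_succ_fst hk]
  have huv' : stepRel u v := huv.2.2.2.resolve_right fun h => by have := h.1; omega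
  have hstep : stepRel u (P.parent b v) := hpar ▸ stepRel_clampBelow_of_mem_square
    (P.stepRel_vertexAt hk) (P.vertexAt_succ_fst hk) husq hvsq huv'
  by_cases h : P.parent b v = u
  · exact .inl h
  · exact .inr ⟨Ne.symm h, husq.1, (P.parent_mem_square hv hlev).1.1, .inl hstep⟩

theorem adj_parent_of_stepRel {n : ℕ} {u v : V3} (hu : u ∈ enlargeSet N b P)
    (hv : v ∈ enlargeSet N b P) (hlevu : P.level u = n + 1) (hlevv : P.level v = n + 1)
    (huv : stepRel u v) : (cubeGraph N).Adj (P.parent b u) v := by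
  obtain ⟨hk, husq, hpar⟩ := P.parent_spec hu hlevu
  obtain ⟨-, hvsq, -⟩ := P.parent_spec hv hlevv
  have hx : u.1 = v.1 := husq.2.1.trans hvsq.2.1.symm
  exact ⟨ne_of_apply_ne Prod.fst (by rw [parent_fst]; omega),
    (P.parent_mem_square hu hlevu).1.1, hvsq.1,
    .inl (hpar ▸ clampBelow_stepRel_of_stepRel (P.stepRel_vertexAt hk) husq hvsq huv)⟩

theorem isTriangulatingParent :
    (cubeGraph N).IsTriangulatingParent (enlargeSet N b P) P.level (P.parent b) where
  parent_mem _ hv h0 := P.parent_mem_enlargeSet hv (Nat.succ_pred_eq_of_ne_zero h0).symm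
  level_parent _ hv h0 := by
    rw [P.level_parent hv (Nat.succ_pred_eq_of_ne_zero h0).symm]
    exact Nat.succ_pred_eq_of_ne_zero h0
  adj_parent _ hv h0 := P.adj_parent hv (Nat.succ_pred_eq_of_ne_zero h0).symm
  level_le u _ v _ huv := by
    simp only [level]
    rcases huv.2.2.2 with h | h <;> (have := h.1; have := h.2.1; omega)
  up_edge _ hu _ hv huv hlev := P.parent_eq_or_adj_of_level_succ hu hv huv hlev
  flat_edge u hu v hv huv hlev h0 := by
    have hlevu := (Nat.succ_pred_eq_of_ne_zero h0).symm
    rcases huv.2.2.2 with h | h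
    · exact .inl (P.adj_parent_of_stepRel hu hv hlevu (hlev ▸ hlevu) h)
    · exact .inr (P.adj_parent_of_stepRel hv hu (hlev ▸ hlevu) hlevu h)

end Staircase

theorem stmt_10_general (N b : ℕ) (P : Staircase N)
    (X : Set V3)
    (hblocks : BlocksSet N b P X)
    (hmin : ∀ Y : Set V3, Y ⊂ X → ¬ BlocksSet N b P Y) :
    ((cubeGraph N).induce X).Connected := by
  have H := P.isTriangulatingParent (b := b)
  have hS₁ := P.setOf_level_eq_zero (b := b)
  have hlast : P.last ∈ square N P.last b := self_mem_square (P.mem _)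
  refine connected_induce_of_minimal_separator (E := enlargeSet N b P)
    (S₁ := square N P.first b) (S₂ := square N P.last b)
    (hS₁ ▸ H.cocyclesAreCoboundaries (ZMod 2)) (P.square_subset_enlargeSet 0)
    (P.square_subset_enlargeSet (Fin.last P.k)) (square_subset_reachableWithin (P.mem _))
    ⟨P.last, ?_, hlast⟩ hblocks hmin
  rw [← hS₁]
  exact H.subset_reachableWithin (P.square_subset_enlargeSet (Fin.last P.k) hlast)

/-- If `X` is a minimal set of vertices of the `b`-enlargement `G` of a staircase
intersecting every path of `G` from its left side to its right side, then `G[X]` is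
connected. -/
theorem stmt_10 (N b : ℕ) (hN : 1 ≤ N) (P : Staircase N)
    (X : Set V3) (hXsub : X ⊆ enlargeSet N b P)
    (hblocks : BlocksSet N b P X)
    (hmin : ∀ Y : Set V3, Y ⊂ X → ¬ BlocksSet N b P Y) :
    ((cubeGraph N).induce X).Connected :=
  stmt_10_general N b P X hblocks hmin
end

section
/- Let n ≥ 1, b ≥ 0, t ≥ 0 and d ≥ n + b be integers, and let N be sufficiently large (N ≥ (8t+5)d suffices). For every vertex z = (j,k) of the (2t+1) × (2t+1) grid, let p_z = (4dj + 4dk, 2dj + dk, dj + 2dk) and let P_z be a staircase contained in the subgrid Q_n(p_z) of Q_N. Then for every edge uz of the (2t+1) × (2t+1) grid there exists a staircase P_{uz} in Q_N joining P_u with P_z; moreover, these staircases can be chosen so that for any two edges uz and u'z' of the grid with {u,z} ∩ {u',z'} = ∅, the b-enlargements of P_{uz} and P_{u'z'} are vertex-disjoint. -/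
/-!
Orient every grid edge from `u` to `z = u + (1,0)` or `u + (0,1)`. Then `p_z - p_u` is
`(4d, 2d, d)` or `(4d, d, 2d)`, so, as `n ≤ d`, the last vertex of `P_u` can be joined to the
first vertex of `P_z` by the greedy staircase that raises `y` as early and `z` as late as
possible; `P_{uz}` is `P_u`, followed by this connector, followed by `P_z`. Its `b`-enlargement
lies in an explicit polyhedral region determined by `p_u` and `p_z`. In the coordinates
`(s, t) = (j + k, 2j + k)` the base point is `(4ds, dt, d(3s - t))`, so the regions of two edges
can only meet if `|s - s'| ≤ 1` and `|t - t'| ≤ 2`, and the finitely many relative positions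
left are excluded by linear arithmetic, using `n + b ≤ d`.
-/

open SimpleGraph

/-- The vertex set of the subgrid `Q_n(p)` of `Q_N`. -/
def subBoxSet (N n : ℕ) (p : V3) : Set V3 :=
  {u | inCube N u ∧
    p.1 ≤ u.1 ∧ u.1 ≤ p.1 + (n : ℤ) - 1 ∧
    p.2.1 ≤ u.2.1 ∧ u.2.1 ≤ p.2.1 + (n : ℤ) - 1 ∧
    p.2.2 ≤ u.2.2 ∧ u.2.2 ≤ p.2.2 + (n : ℤ) - 1}

/-- The base point `p_d(j,k) = (4dj + 4dk, 2dj + dk, dj + 2dk)`. -/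
def basePt (d j k : ℕ) : V3 :=
  ((4 * d * j + 4 * d * k : ℤ), (2 * d * j + d * k : ℤ), (d * j + 2 * d * k : ℤ))

/-- Adjacency in the `m × m` grid: `|j₁ − j₂| + |k₁ − k₂| = 1`. -/
def gridAdj {m : ℕ} (u z : Fin m × Fin m) : Prop :=
  ((u.1.val : ℤ) - z.1.val).natAbs + ((u.2.val : ℤ) - z.2.val).natAbs = 1

/-- `P₁` is an initial segment of the staircase `P`. -/
def IsInitSeg {N : ℕ} (P₁ P : Staircase N) : Prop :=
  ∃ h : P₁.k ≤ P.k, ∀ i : Fin (P₁.k + 1),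
    P₁.v i = P.v ⟨i.val, by have := i.isLt; omega⟩

/-- `P₂` is a final segment of the staircase `P`. -/
def IsFinalSeg {N : ℕ} (P₂ P : Staircase N) : Prop :=
  ∃ h : P₂.k ≤ P.k, ∀ i : Fin (P₂.k + 1),
    P₂.v i = P.v ⟨P.k - P₂.k + i.val, by have := i.isLt; omega⟩

/-- The staircase `P` joins `P₁` with `P₂`: one of them is an initial segment of `P` and
the other one is a final segment of `P`. -/
def Joins {N : ℕ} (P P₁ P₂ : Staircase N) : Prop :=
  (IsInitSeg P₁ P ∧ IsFinalSeg P₂ P) ∨ (IsInitSeg P₂ P ∧ IsFinalSeg P₁ P)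

namespace Staircase

variable {N : ℕ}

def IsStairStep (u v : V3) : Prop := stepRel u v ∧ v.1 = u.1 + 1

lemma cubeGraph_adj_of_isStairStep {u v : V3} (hu : inCube N u) (hv : inCube N v)
    (h : IsStairStep u v) : (cubeGraph N).Adj u v :=
  ⟨fun huv => by have := h.2; rw [huv] at this; omega, hu, hv, Or.inl h.1⟩

lemma isStairStep (P : Staircase N) (i : Fin P.k) :
    IsStairStep (P.v i.castSucc) (P.v i.succ) := by
  refine ⟨?_, P.step_x i⟩
  have hx := P.step_x i
  rcases (P.adj i).2.2.2 with h | h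
  · exact h
  · unfold stepRel at h ⊢
    omega

def ofFn (k : ℕ) (f : ℕ → V3) (mem : ∀ m ≤ k, inCube N (f m))
    (step : ∀ m < k, IsStairStep (f m) (f (m + 1))) : Staircase N where
  k := k
  v i := f i
  mem i := mem i (Nat.lt_succ_iff.1 i.isLt)
  adj i := cubeGraph_adj_of_isStairStep (mem _ (by omega)) (mem _ (by simp)) (step i i.isLt)
  step_x i := (step i i.isLt).2
  mono_y i := (step i i.isLt).1.2.2.1
  mono_z i := (step i i.isLt).1.2.2.2.2.1

def vertex (P : Staircase N) (m : ℕ) : V3 := P.v ⟨min m P.k, by omega⟩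

lemma vertex_val (P : Staircase N) (i : Fin (P.k + 1)) : P.vertex i = P.v i := by
  simp only [vertex, min_eq_left (Nat.lt_succ_iff.1 i.isLt)]

lemma vertex_zero (P : Staircase N) : P.vertex 0 = P.first :=
  P.vertex_val 0

lemma vertex_k (P : Staircase N) : P.vertex P.k = P.last :=
  P.vertex_val (Fin.last P.k)

lemma inCube_vertex (P : Staircase N) (m : ℕ) : inCube N (P.vertex m) := P.mem _

lemma isStairStep_vertex (P : Staircase N) {m : ℕ} (hm : m < P.k) :
    IsStairStep (P.vertex m) (P.vertex (m + 1)) := by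
  simpa [vertex, min_eq_left hm.le, min_eq_left (Nat.succ_le_of_lt hm)] using
    P.isStairStep ⟨m, hm⟩

def append (P Q : Staircase N) (h : P.last = Q.first) : Staircase N :=
  ofFn (P.k + Q.k) (fun m => if m < P.k then P.vertex m else Q.vertex (m - P.k))
    (fun m _ => by split_ifs <;> apply inCube_vertex)
    (fun m hm => by
      rcases lt_or_ge (m + 1) P.k with h₁ | h₁
      · simpa [h₁, (Nat.lt_succ_self m).trans h₁] using
          P.isStairStep_vertex (m := m) (by omega)
      rcases Nat.lt_or_ge m P.k with h₂ | h₂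
      · have hm : m + 1 = P.k := by omega
        simpa [h₂, hm, P.vertex_k, h, ← Q.vertex_zero] using P.isStairStep_vertex h₂
      · simpa [show ¬ m < P.k by omega, show ¬ m + 1 < P.k by omega,
          show m + 1 - P.k = m - P.k + 1 by omega] using
          Q.isStairStep_vertex (m := m - P.k) (by omega))

lemma inCube_first (P : Staircase N) : inCube N P.first := P.mem _

lemma inCube_last (P : Staircase N) : inCube N P.last := P.mem _

lemma last_append (P Q : Staircase N) (h : P.last = Q.first) :
    (P.append Q h).last = Q.last := by
  show (if P.k + Q.k < P.k then _ else Q.vertex (P.k + Q.k - P.k)) = Q.last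
  rw [if_neg (by omega), Nat.add_sub_cancel_left, vertex_k]

lemma exists_v_append_eq (P Q : Staircase N) (h : P.last = Q.first)
    (i : Fin (P.k + Q.k + 1)) :
    (∃ j, (P.append Q h).v i = P.v j) ∨ ∃ j, (P.append Q h).v i = Q.v j := by
  show (∃ j, ite _ _ _ = _) ∨ ∃ j, ite _ _ _ = _
  split_ifs
  · exact Or.inl ⟨_, rfl⟩
  · exact Or.inr ⟨_, rfl⟩

lemma isInitSeg_append (P Q : Staircase N) (h : P.last = Q.first) :
    IsInitSeg P (P.append Q h) := by
  refine ⟨Nat.le_add_right _ _, fun i => ?_⟩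
  show P.v i = if (i : ℕ) < P.k then P.vertex i else Q.vertex (i - P.k)
  split_ifs with hi
  · rw [vertex_val]
  · have hk : (i : ℕ) = P.k := by omega
    rw [hk, Nat.sub_self, vertex_zero, ← h, ← vertex_k, ← hk, vertex_val]

lemma isFinalSeg_append (P Q : Staircase N) (h : P.last = Q.first) :
    IsFinalSeg Q (P.append Q h) := by
  refine ⟨?_, fun i => ?_⟩
  · exact Nat.le_add_left _ _
  show Q.v i = if P.k + Q.k - Q.k + (i : ℕ) < P.k then P.vertex (P.k + Q.k - Q.k + i)
    else Q.vertex (P.k + Q.k - Q.k + i - P.k)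
  rw [if_neg (by omega), show P.k + Q.k - Q.k + i - P.k = i by omega, vertex_val]

lemma _root_.IsInitSeg.trans {P₁ P₂ P₃ : Staircase N} (h₁₂ : IsInitSeg P₁ P₂)
    (h₂₃ : IsInitSeg P₂ P₃) : IsInitSeg P₁ P₃ := by
  obtain ⟨hk₁₂, hv₁₂⟩ := h₁₂
  obtain ⟨hk₂₃, hv₂₃⟩ := h₂₃
  exact ⟨hk₁₂.trans hk₂₃, fun i => (hv₁₂ i).trans (hv₂₃ _)⟩

/-- The greedy staircase from `q` towards `r`: the `y`-coordinate rises as early as possible,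
the `z`-coordinate as late as possible. -/
def connectorPt (q r : V3) (m : ℕ) : V3 :=
  (q.1 + m, min (q.2.1 + m) r.2.1, max q.2.2 (r.2.2 - (r.1 - q.1) + m))

def IsStairReachable (q r : V3) : Prop :=
  q.2.1 ≤ r.2.1 ∧ q.2.2 ≤ r.2.2 ∧
    r.2.1 - q.2.1 ≤ r.1 - q.1 ∧ r.2.2 - q.2.2 ≤ r.1 - q.1

def connector (q r : V3) (hq : inCube N q) (hr : inCube N r) (h : IsStairReachable q r) :
    Staircase N :=
  ofFn (r.1 - q.1).toNat (connectorPt q r)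
    (fun m hm => by simp only [inCube, connectorPt, IsStairReachable] at *; omega)
    (fun m hm => by
      simp only [IsStairStep, stepRel, connectorPt, IsStairReachable] at *; push_cast; omega)

lemma connector_first {q r : V3} (hq : inCube N q) (hr : inCube N r)
    (h : IsStairReachable q r) : (connector q r hq hr h).first = q := by
  unfold IsStairReachable at h
  show connectorPt q r 0 = q
  ext <;> simp [connectorPt] <;> omega

lemma connector_last {q r : V3} (hq : inCube N q) (hr : inCube N r)
    (h : IsStairReachable q r) : (connector q r hq hr h).last = r := by
  unfold IsStairReachable at h
  show connectorPt q r (r.1 - q.1).toNat = r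
  ext <;> simp [connectorPt] <;> omega

instance : DecidableRel IsStairReachable := fun _ _ => by
  unfold IsStairReachable; infer_instance

/-- When `P₁.last` cannot reach `P₂.first` this is the junk value `P₁`. -/
def join (P₁ P₂ : Staircase N) : Staircase N :=
  if h : IsStairReachable P₁.last P₂.first then
    (P₁.append (connector P₁.last P₂.first P₁.inCube_last P₂.inCube_first h)
      (connector_first _ _ h).symm).append P₂ (by rw [last_append, connector_last])
  else P₁

lemma joins_join {P₁ P₂ : Staircase N} (h : IsStairReachable P₁.last P₂.first) :
    Joins (P₁.join P₂) P₁ P₂ := by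
  rw [join, dif_pos h]
  exact Or.inl ⟨IsInitSeg.trans (isInitSeg_append _ _ _) (isInitSeg_append _ _ _),
    isFinalSeg_append _ _ _⟩

lemma exists_v_join_eq {P₁ P₂ : Staircase N} (h : IsStairReachable P₁.last P₂.first)
    (i : Fin ((P₁.join P₂).k + 1)) :
    (∃ j, (P₁.join P₂).v i = P₁.v j) ∨
    (∃ m ≤ (P₂.first.1 - P₁.last.1).toNat,
      (P₁.join P₂).v i = connectorPt P₁.last P₂.first m) ∨
    ∃ j, (P₁.join P₂).v i = P₂.v j := by
  revert i
  rw [join, dif_pos h]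
  intro i
  rcases exists_v_append_eq _ _ _ i with ⟨j, hj⟩ | ⟨j, hj⟩
  · rcases exists_v_append_eq _ _ _ j with ⟨j', hj'⟩ | ⟨j', hj'⟩
    · exact Or.inl ⟨j', hj.trans hj'⟩
    · exact Or.inr (Or.inl ⟨j', Nat.lt_succ_iff.1 j'.isLt, hj.trans hj'⟩)
  · exact Or.inr (Or.inr ⟨j, hj⟩)

end Staircase

section EdgeRegion

open Staircase

variable {N n b d : ℕ} {p q : V3}

/-- Beyond the bounding box, the last four conditions say that along the connector `y` climbs
with slope one until it reaches `q.2.1`, and `z` climbs only in the final stretch before `q`. -/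
def edgeRegion (n b : ℕ) (p q : V3) : Set V3 :=
  {w | p.1 ≤ w.1 ∧ w.1 ≤ q.1 + n - 1 ∧
    p.2.1 ≤ w.2.1 ∧ w.2.1 ≤ q.2.1 + n - 1 + b ∧
    p.2.2 ≤ w.2.2 ∧ w.2.2 ≤ q.2.2 + n - 1 + b ∧
    w.2.1 ≤ p.2.1 + n - 1 + b + (w.1 - p.1) ∧
    (p.2.1 + (w.1 - p.1) - (n - 1) ≤ w.2.1 ∨ q.2.1 ≤ w.2.1) ∧
    (w.2.2 ≤ p.2.2 + n - 1 + b ∨ w.2.2 ≤ q.2.2 + n - 1 + b - (q.1 - w.1)) ∧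
    q.2.2 - (q.1 - w.1) - (n - 1) ≤ w.2.2}

lemma isStairReachable_of_mem_subBoxSet {v w : V3} (hnd : n ≤ d) (hx : q.1 = p.1 + 4 * d)
    (hy : p.2.1 + d ≤ q.2.1 ∧ q.2.1 ≤ p.2.1 + 2 * d)
    (hz : p.2.2 + d ≤ q.2.2 ∧ q.2.2 ≤ p.2.2 + 2 * d)
    (hv : v ∈ subBoxSet N n p) (hw : w ∈ subBoxSet N n q) : IsStairReachable v w := by
  simp only [subBoxSet, Set.mem_ofPred_eq] at hv hw
  unfold IsStairReachable
  omega

lemma enlargeSet_join_subset_edgeRegion {P₁ P₂ : Staircase N} (hnd : n ≤ d)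
    (hx : q.1 = p.1 + 4 * d) (hy : p.2.1 + d ≤ q.2.1 ∧ q.2.1 ≤ p.2.1 + 2 * d)
    (hz : p.2.2 + d ≤ q.2.2 ∧ q.2.2 ≤ p.2.2 + 2 * d)
    (h₁ : ∀ i, P₁.v i ∈ subBoxSet N n p) (h₂ : ∀ i, P₂.v i ∈ subBoxSet N n q) :
    enlargeSet N b (P₁.join P₂) ⊆ edgeRegion n b p q := by
  have hlast : P₁.last ∈ subBoxSet N n p := h₁ _
  have hfirst : P₂.first ∈ subBoxSet N n q := h₂ _
  have hr := isStairReachable_of_mem_subBoxSet hnd hx hy hz hlast hfirst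
  refine Set.iUnion_subset fun i w hw => ?_
  simp only [square, Set.mem_ofPred_eq] at hw
  simp only [subBoxSet, Set.mem_ofPred_eq] at h₁ h₂ hlast hfirst
  simp only [edgeRegion, Set.mem_ofPred_eq]
  rcases exists_v_join_eq hr i with ⟨j, hj⟩ | ⟨m, hm, hj⟩ | ⟨j, hj⟩ <;> rw [hj] at hw
  · have := h₁ j
    omega
  · unfold IsStairReachable at hr
    simp only [connectorPt] at hw
    omega
  · have := h₂ j
    omega

end EdgeRegion

section Grid

open Staircase

def latticePt (d : ℕ) (c : ℤ × ℤ) : V3 := (4 * (d * c.1), d * c.2, 3 * (d * c.1) - d * c.2)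

lemma disjoint_edgeRegion_latticePt {n b d : ℕ} (hd : n + b ≤ d) {c c' : ℤ × ℤ} {E F : ℤ}
    (hE : E = 1 ∨ E = 2) (hF : F = 1 ∨ F = 2) (h₁ : c ≠ c') (h₂ : c ≠ c' + (1, F))
    (h₃ : c + (1, E) ≠ c') (h₄ : c + (1, E) ≠ c' + (1, F)) :
    Disjoint (edgeRegion n b (latticePt d c) (latticePt d (c + (1, E))))
      (edgeRegion n b (latticePt d c') (latticePt d (c' + (1, F)))) := by
  obtain ⟨σ, τ, rfl⟩ : ∃ σ τ : ℤ, c' = c + (σ, τ) :=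
    ⟨c'.1 - c.1, c'.2 - c.2, by ext <;> simp⟩
  simp only [ne_eq, Prod.ext_iff, Prod.fst_add, Prod.snd_add] at h₁ h₂ h₃ h₄
  rw [Set.disjoint_left]
  intro w hw hw'
  simp only [edgeRegion, latticePt, Prod.fst_add, Prod.snd_add, mul_add, mul_one,
    Set.mem_ofPred_eq] at hw hw'
  have hdE : (d : ℤ) ≤ d * E ∧ d * E ≤ 2 * d := by
    rcases hE with rfl | rfl <;> constructor <;> linarith
  have hdF : (d : ℤ) ≤ d * F ∧ d * F ≤ 2 * d := by
    rcases hF with rfl | rfl <;> constructor <;> linarith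
  have hd0 : (0 : ℤ) ≤ d := by positivity
  rcases le_or_gt 2 σ with hσ | hσ
  · have := mul_le_mul_of_nonneg_left hσ hd0
    omega
  rcases le_or_gt σ (-2) with hσ' | hσ'
  · have := mul_le_mul_of_nonneg_left hσ' hd0
    omega
  rcases le_or_gt 3 τ with hτ | hτ
  · have := mul_le_mul_of_nonneg_left hτ hd0
    omega
  rcases le_or_gt τ (-3) with hτ' | hτ'
  · have := mul_le_mul_of_nonneg_left hτ' hd0
    omega
  rcases hE with rfl | rfl <;> rcases hF with rfl | rfl <;>
    interval_cases σ <;> interval_cases τ <;> omega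

lemma latticePt_add_step (d : ℕ) (c : ℤ × ℤ) {E : ℤ} (hE : E = 1 ∨ E = 2) :
    (latticePt d (c + (1, E))).1 = (latticePt d c).1 + 4 * d ∧
    ((latticePt d c).2.1 + d ≤ (latticePt d (c + (1, E))).2.1 ∧
      (latticePt d (c + (1, E))).2.1 ≤ (latticePt d c).2.1 + 2 * d) ∧
    ((latticePt d c).2.2 + d ≤ (latticePt d (c + (1, E))).2.2 ∧
      (latticePt d (c + (1, E))).2.2 ≤ (latticePt d c).2.2 + 2 * d) := by
  simp only [latticePt, Prod.fst_add, Prod.snd_add, mul_add, mul_one, true_and]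
  rcases hE with rfl | rfl <;> omega

variable {m : ℕ}

def latticeCoord (u : Fin m × Fin m) : ℤ × ℤ := (u.1.val + u.2.val, 2 * u.1.val + u.2.val)

lemma latticeCoord_injective : Function.Injective (latticeCoord (m := m)) := by
  intro u v h
  simp only [latticeCoord, Prod.ext_iff] at h
  ext <;> omega

lemma basePt_eq_latticePt (d : ℕ) (u : Fin m × Fin m) :
    basePt d u.1 u.2 = latticePt d (latticeCoord u) := by
  simp only [basePt, latticePt, latticeCoord]
  ext <;> ring

def GridStep (u z : Fin m × Fin m) : Prop :=
  (z.1.val = u.1.val + 1 ∧ z.2.val = u.2.val) ∨ (z.1.val = u.1.val ∧ z.2.val = u.2.val + 1)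

instance : DecidableRel (GridStep (m := m)) := fun _ _ => by
  unfold GridStep; infer_instance

lemma gridAdj_iff_gridStep {u z : Fin m × Fin m} :
    gridAdj u z ↔ GridStep u z ∨ GridStep z u := by
  unfold gridAdj GridStep
  omega

lemma GridStep.not_symm {u z : Fin m × Fin m} (h : GridStep u z) : ¬ GridStep z u := by
  unfold GridStep at *
  omega

lemma GridStep.exists_latticeCoord_eq {u z : Fin m × Fin m} (h : GridStep u z) :
    ∃ E : ℤ, (E = 1 ∨ E = 2) ∧ latticeCoord z = latticeCoord u + (1, E) := by
  rcases h with ⟨h₁, h₂⟩ | ⟨h₁, h₂⟩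
  · refine ⟨2, Or.inr rfl, ?_⟩
    simp only [latticeCoord, h₁, h₂, Prod.mk_add_mk]
    ext <;> push_cast <;> ring
  · refine ⟨1, Or.inl rfl, ?_⟩
    simp only [latticeCoord, h₁, h₂, Prod.mk_add_mk]
    ext <;> push_cast <;> ring

variable {N n b d : ℕ} {P : Fin m × Fin m → Staircase N} {u z u' z' : Fin m × Fin m}

lemma isStairReachable_of_gridStep (hnd : n ≤ d)
    (hP : ∀ z i, (P z).v i ∈ subBoxSet N n (basePt d z.1 z.2)) (h : GridStep u z) :
    Staircase.IsStairReachable (P u).last (P z).first := by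
  obtain ⟨E, hE, hcz⟩ := h.exists_latticeCoord_eq
  obtain ⟨hx, hy, hz⟩ := latticePt_add_step d (latticeCoord u) hE
  rw [← hcz, ← basePt_eq_latticePt, ← basePt_eq_latticePt] at hx hy hz
  exact isStairReachable_of_mem_subBoxSet hnd hx hy hz (hP u _) (hP z _)

lemma enlargeSet_join_subset_edgeRegion_of_gridStep (hnd : n ≤ d)
    (hP : ∀ z i, (P z).v i ∈ subBoxSet N n (basePt d z.1 z.2)) (h : GridStep u z) :
    enlargeSet N b ((P u).join (P z)) ⊆
      edgeRegion n b (basePt d u.1 u.2) (basePt d z.1 z.2) := by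
  obtain ⟨E, hE, hcz⟩ := h.exists_latticeCoord_eq
  obtain ⟨hx, hy, hz⟩ := latticePt_add_step d (latticeCoord u) hE
  rw [← hcz, ← basePt_eq_latticePt, ← basePt_eq_latticePt] at hx hy hz
  exact enlargeSet_join_subset_edgeRegion hnd hx hy hz (hP u) (hP z)

lemma disjoint_edgeRegion_of_gridStep (hd : n + b ≤ d) (h : GridStep u z) (h' : GridStep u' z')
    (h₁ : u ≠ u') (h₂ : u ≠ z') (h₃ : z ≠ u') (h₄ : z ≠ z') :
    Disjoint (edgeRegion n b (basePt d u.1 u.2) (basePt d z.1 z.2))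
      (edgeRegion n b (basePt d u'.1 u'.2) (basePt d z'.1 z'.2)) := by
  obtain ⟨E, hE, hcz⟩ := h.exists_latticeCoord_eq
  obtain ⟨F, hF, hcz'⟩ := h'.exists_latticeCoord_eq
  have hne : ∀ {v w : Fin m × Fin m}, v ≠ w → latticeCoord v ≠ latticeCoord w :=
    latticeCoord_injective.ne
  simp only [basePt_eq_latticePt, hcz, hcz']
  refine disjoint_edgeRegion_latticePt hd hE hF (hne h₁) ?_ ?_ ?_
  · simpa [hcz'] using hne h₂
  · simpa [hcz] using hne h₃
  · simpa [hcz, hcz'] using hne h₄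

def gridEdgeStair (P : Fin m × Fin m → Staircase N) (u z : Fin m × Fin m) : Staircase N :=
  if GridStep u z then (P u).join (P z) else (P z).join (P u)

lemma exists_gridEdgeStair_eq_join (h : gridAdj u z) :
    ∃ a c, GridStep a c ∧ gridEdgeStair P u z = (P a).join (P c) ∧
      (a = u ∧ c = z ∨ a = z ∧ c = u) := by
  rcases gridAdj_iff_gridStep.1 h with h | h
  · exact ⟨u, z, h, if_pos h, Or.inl ⟨rfl, rfl⟩⟩
  · exact ⟨z, u, h, if_neg h.not_symm, Or.inr ⟨rfl, rfl⟩⟩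

end Grid

theorem stmt_12_general (n b t d N : ℕ) (hd : n + b ≤ d)
    (P : Fin (2 * t + 1) × Fin (2 * t + 1) → Staircase N)
    (hP : ∀ z : Fin (2 * t + 1) × Fin (2 * t + 1), ∀ i,
      (P z).v i ∈ subBoxSet N n (basePt d z.1.val z.2.val)) :
    ∃ PE : Fin (2 * t + 1) × Fin (2 * t + 1) → Fin (2 * t + 1) × Fin (2 * t + 1) →
        Staircase N,
      (∀ u z, gridAdj u z → Joins (PE u z) (P u) (P z)) ∧
      (∀ u z u' z', gridAdj u z → gridAdj u' z' →
        u ≠ u' → u ≠ z' → z ≠ u' → z ≠ z' →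
        Disjoint (enlargeSet N b (PE u z)) (enlargeSet N b (PE u' z'))) := by
  have hnd : n ≤ d := by omega
  refine ⟨gridEdgeStair P, fun u z huz => ?_, fun u z u' z' huz hu'z' h₁ h₂ h₃ h₄ => ?_⟩
  · obtain ⟨a, c, hac, heq, hend⟩ := exists_gridEdgeStair_eq_join (P := P) huz
    rw [heq]
    rcases hend with ⟨rfl, rfl⟩ | ⟨rfl, rfl⟩
    · exact Staircase.joins_join (isStairReachable_of_gridStep hnd hP hac)
    · exact (Staircase.joins_join (isStairReachable_of_gridStep hnd hP hac)).symm
  · obtain ⟨a, c, hac, heq, hend⟩ := exists_gridEdgeStair_eq_join (P := P) huz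
    obtain ⟨a', c', hac', heq', hend'⟩ := exists_gridEdgeStair_eq_join (P := P) hu'z'
    rw [heq, heq']
    refine (disjoint_edgeRegion_of_gridStep hd hac hac' ?_ ?_ ?_ ?_).mono
      (enlargeSet_join_subset_edgeRegion_of_gridStep hnd hP hac)
      (enlargeSet_join_subset_edgeRegion_of_gridStep hnd hP hac') <;>
    rcases hend with ⟨rfl, rfl⟩ | ⟨rfl, rfl⟩ <;>
    rcases hend' with ⟨rfl, rfl⟩ | ⟨rfl, rfl⟩ <;> assumption

/-- Given staircases `P_z ⊆ Q_n(p_z)` for the vertices `z` of the `(2t+1) × (2t+1)` grid,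
each edge `uz` of the grid can be realized by a staircase `P_{uz}` joining `P_u` with `P_z`,
such that the `b`-enlargements corresponding to edges with no common endpoint are
vertex-disjoint. -/
theorem stmt_12 (n b t d N : ℕ) (hn : 1 ≤ n) (hd : n + b ≤ d)
    (hN : (8 * t + 5) * d ≤ N)
    (P : Fin (2 * t + 1) × Fin (2 * t + 1) → Staircase N)
    (hP : ∀ z : Fin (2 * t + 1) × Fin (2 * t + 1), ∀ i,
      (P z).v i ∈ subBoxSet N n (basePt d z.1.val z.2.val)) :
    ∃ PE : Fin (2 * t + 1) × Fin (2 * t + 1) → Fin (2 * t + 1) × Fin (2 * t + 1) →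
        Staircase N,
      (∀ u z, gridAdj u z → Joins (PE u z) (P u) (P z)) ∧
      (∀ u z u' z', gridAdj u z → gridAdj u' z' →
        u ≠ u' → u ≠ z' → z ≠ u' → z ≠ z' →
        Disjoint (enlargeSet N b (PE u z)) (enlargeSet N b (PE u' z'))) :=
  stmt_12_general n b t d N hd P hP
end
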